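/- arXiv:1905.10964 — 2 statements merged into one kernel-verified Lean document; each statement's English description precedes it below -/
import Mathlib

section
/- For the abstaining loss L(a) = (1 - p_{k+1}) * (-log(p_j / (1 - p_{k+1}))) + α * log(1 / (1 - p_{k+1})), where p_i = exp(a_i) / Σ_{m=1}^{k+1} exp(a_m) is the softmax over k+1 logits a ∈ ℝ^{k+1}, j ≤ k is the true class, and α ≥ 0, the partial derivative of L with respect to the true-class logit a_j is nonpositive: ∂L/∂a_j ≤ 0. -/
/-!
With the other logits fixed, write `E = exp x` for the true-class weight, `Q = E + c` for the
non-abstaining mass and `S = Q + b` for the total mass. The loss is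
`(Q / S) * log (Q / E) + α * log (S / Q)`, whose derivative in `x` is
`(E b / S²) * log (Q / E) - c / S + α * (E / S - E / Q)`. The penalty term is nonpositive since
`Q ≤ S`, and `log (Q / E) ≤ Q / E - 1 = c / E` bounds the first term by `b c / S² ≤ c / S`.
-/

open Real Finset

-- `b` is the exponential mass of the abstention logit and `c` that of the classes other than the
-- true one and abstention, so the loss is a function of the true-class logit `x` alone.
noncomputable def trueLogitLoss (b c α x : ℝ) : ℝ :=
  (exp x + c) / (exp x + c + b) * (log (exp x + c) - x)
    + α * (log (exp x + c + b) - log (exp x + c))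

section
variable {b c : ℝ}

theorem abstainLoss_eq_of_masses {E : ℝ} (hE : 0 < E) (hc : 0 ≤ c) (hb : 0 ≤ b) (α : ℝ) :
    (1 - b / (E + c + b)) * -log (E / (E + c + b) / (1 - b / (E + c + b)))
      + α * log (1 / (1 - b / (E + c + b)))
      = (E + c) / (E + c + b) * (log (E + c) - log E)
        + α * (log (E + c + b) - log (E + c)) := by
  have hQ : 0 < E + c := by positivity
  have hS : 0 < E + c + b := by positivity
  have hu : 1 - b / (E + c + b) = (E + c) / (E + c + b) := by field_simp; ring
  rw [hu, div_div_div_cancel_right₀ hS.ne', one_div_div, log_div hE.ne' hQ.ne',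
    log_div hS.ne' hQ.ne']
  ring

theorem hasDerivAt_trueLogitLoss (hc : 0 ≤ c) (hb : 0 ≤ b) (α x : ℝ) :
    HasDerivAt (trueLogitLoss b c α)
      (exp x * b / (exp x + c + b) ^ 2 * (log (exp x + c) - x) - c / (exp x + c + b)
        + α * (exp x / (exp x + c + b) - exp x / (exp x + c))) x := by
  have hQ : 0 < exp x + c := by positivity
  have hS : 0 < exp x + c + b := by positivity
  have hQ' : HasDerivAt (fun y => exp y + c) (exp x) x := (hasDerivAt_exp x).add_const c
  have hS' : HasDerivAt (fun y => exp y + c + b) (exp x) x := hQ'.add_const b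
  have h := ((hQ'.div hS' hS.ne').mul ((hQ'.log hQ.ne').sub (hasDerivAt_id x))).add
    (((hS'.log hS.ne').sub (hQ'.log hQ.ne')).const_mul α)
  refine h.congr_deriv ?_
  simp only [Pi.div_apply, Pi.sub_apply, id]
  field_simp
  ring

theorem deriv_trueLogitLoss_nonpos (hc : 0 ≤ c) (hb : 0 ≤ b) {α : ℝ} (hα : 0 ≤ α) (x : ℝ) :
    deriv (trueLogitLoss b c α) x ≤ 0 := by
  rw [(hasDerivAt_trueLogitLoss hc hb α x).deriv]
  set E := exp x
  have hE : 0 < E := exp_pos x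
  have hQ : 0 < E + c := by positivity
  have hS : 0 < E + c + b := by positivity
  have hlog : log (E + c) - x ≤ c / E := by
    have := log_le_sub_one_of_pos (div_pos hQ hE)
    rwa [log_div hQ.ne' hE.ne', log_exp, add_div, div_self hE.ne', add_sub_cancel_left] at this
  have hfirst : E * b / (E + c + b) ^ 2 * (log (E + c) - x) ≤ c / (E + c + b) :=
    calc E * b / (E + c + b) ^ 2 * (log (E + c) - x)
        ≤ E * b / (E + c + b) ^ 2 * (c / E) := by gcongr
      _ = b / (E + c + b) * (c / (E + c + b)) := by field_simp
      _ ≤ 1 * (c / (E + c + b)) := by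
          gcongr
          exact div_le_one_of_le₀ (by linarith) hS.le
      _ = c / (E + c + b) := one_mul _
  have hpenalty : α * (E / (E + c + b) - E / (E + c)) ≤ 0 :=
    mul_nonpos_of_nonneg_of_nonpos hα
      (sub_nonpos.mpr (div_le_div_of_nonneg_left hE.le hQ (by linarith)))
  linarith

end

theorem sum_exp_update {n : ℕ} (a : Fin n → ℝ) (j : Fin n) (x : ℝ) :
    ∑ m, exp (Function.update a j x m) = exp x + ∑ m ∈ univ.erase j, exp (a m) := by
  simp_rw [Function.apply_update (fun _ => exp)]
  rw [sum_update_of_mem (mem_univ j), sdiff_singleton_eq_erase]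

theorem abstain_loss_deriv_true_class_nonpos_general
    (k : ℕ) (a : Fin (k + 1) → ℝ) (j : Fin (k + 1))
    (hj : (j : ℕ) < k) (α : ℝ) (hα : 0 ≤ α) :
    deriv (fun x : ℝ =>
      (fun (b : Fin (k + 1) → ℝ) =>
        (fun (p : Fin (k + 1) → ℝ) =>
          (1 - p (Fin.last k)) * (-(Real.log (p j / (1 - p (Fin.last k)))))
            + α * Real.log (1 / (1 - p (Fin.last k))))
        (fun i => Real.exp (b i) / ∑ m, Real.exp (b m)))
      (Function.update a j x)) (a j) ≤ 0 := by
  have hj_ne : j ≠ Fin.last k := Fin.ne_of_val_ne (by simpa using hj.ne)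
  set b := exp (a (Fin.last k))
  set c := ∑ m ∈ univ.erase j, exp (a m) - b
  have hb : 0 ≤ b := (exp_pos _).le
  have hc : 0 ≤ c := sub_nonneg.2 <|
    single_le_sum (fun m _ => (exp_pos (a m)).le) (mem_erase.2 ⟨hj_ne.symm, mem_univ _⟩)
  convert deriv_trueLogitLoss_nonpos hc hb hα (a j) using 2
  funext x
  have hsum : ∑ m, exp (Function.update a j x m) = exp x + c + b := by
    rw [sum_exp_update]; ring
  simp only [hsum, Function.update_self, Function.update_of_ne hj_ne.symm]
  rw [abstainLoss_eq_of_masses (exp_pos x) hc hb, log_exp]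
  rfl

/-- The partial derivative of the abstaining loss with respect to the
true-class logit `a j` is nonpositive, for `α ≥ 0`. -/
theorem abstain_loss_deriv_true_class_nonpos
    (k : ℕ) (hk : 1 ≤ k) (a : Fin (k + 1) → ℝ) (j : Fin (k + 1))
    (hj : (j : ℕ) < k) (α : ℝ) (hα : 0 ≤ α) :
    deriv (fun x : ℝ =>
      (fun (b : Fin (k + 1) → ℝ) =>
        (fun (p : Fin (k + 1) → ℝ) =>
          (1 - p (Fin.last k)) * (-(Real.log (p j / (1 - p (Fin.last k)))))
            + α * Real.log (1 / (1 - p (Fin.last k))))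
        (fun i => Real.exp (b i) / ∑ m, Real.exp (b m)))
      (Function.update a j x)) (a j) ≤ 0 :=
  abstain_loss_deriv_true_class_nonpos_general k a j hj α hα
end

section
/- The partial derivative of the abstaining loss with respect to the abstention logit is strictly negative, ∂L/∂a_{k+1} < 0, if and only if α < (1 - p_{k+1}) * ( -log( p_j / (1 - p_{k+1}) ) ). -/
/-!
Moving the abstention logit `a_{k+1}` rescales all other softmax probabilities by the same
factor, so `p_j / (1 - p_{k+1})` does not depend on it, while `∂p_{k+1}/∂a_{k+1} = p(1 - p)`
with `p = p_{k+1}`. Hence `∂L/∂a_{k+1} = p_{k+1} (α - (1 - p_{k+1}) (-log (p_j / (1 - p_{k+1}))))`,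
whose sign is that of the second factor.
-/
open Real Finset Function

noncomputable def softmax {ι : Type*} [Fintype ι] (b : ι → ℝ) (i : ι) : ℝ :=
  exp (b i) / ∑ m, exp (b m)

/-- `i` is the abstention class (the paper's `k + 1`) and `j` the true class. -/
noncomputable def abstainCrossEntropy {ι : Type*} (i j : ι) (p : ι → ℝ) : ℝ :=
  (1 - p i) * -log (p j / (1 - p i))

noncomputable def abstainLoss {ι : Type*} (α : ℝ) (i j : ι) (p : ι → ℝ) : ℝ :=
  abstainCrossEntropy i j p + α * log (1 / (1 - p i))

lemma hasDerivAt_abstainLoss_of_logistic {q : ℝ → ℝ} {x : ℝ}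
    (hq : HasDerivAt q (q x * (1 - q x)) x) (hq1 : q x < 1) (K α : ℝ) :
    HasDerivAt (fun y => (1 - q y) * K + α * log (1 / (1 - q y)))
      (q x * (α - (1 - q x) * K)) x := by
  have hne : 1 - q x ≠ 0 := (sub_pos.mpr hq1).ne'
  have hsub := hq.const_sub 1
  have hlog := (hsub.inv hne).log (inv_ne_zero hne)
  simp only [Pi.inv_apply, ← one_div] at hlog
  refine ((hsub.mul_const K).add (hlog.const_mul α)).congr_deriv ?_
  field_simp
  ring

section Softmax

variable {ι : Type*} [Fintype ι]

lemma sum_exp_pos [Nonempty ι] (b : ι → ℝ) : 0 < ∑ m, exp (b m) :=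
  sum_pos (fun m _ => exp_pos (b m)) univ_nonempty

lemma softmax_pos (b : ι → ℝ) (i : ι) : 0 < softmax b i :=
  have : Nonempty ι := ⟨i⟩
  div_pos (exp_pos _) (sum_exp_pos b)

variable [DecidableEq ι]

lemma one_sub_softmax (b : ι → ℝ) (i : ι) :
    1 - softmax b i = (∑ m ∈ univ.erase i, exp (b m)) / ∑ m, exp (b m) := by
  have : Nonempty ι := ⟨i⟩
  rw [softmax, eq_div_iff (sum_exp_pos b).ne', sub_mul, div_mul_cancel₀ _ (sum_exp_pos b).ne',
    one_mul, ← add_sum_erase univ _ (mem_univ i), add_sub_cancel_left]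

lemma softmax_lt_one (b : ι → ℝ) {i j : ι} (hji : j ≠ i) : softmax b i < 1 := by
  have : Nonempty ι := ⟨i⟩
  have hpos : 0 < ∑ m ∈ univ.erase i, exp (b m) :=
    sum_pos (fun m _ => exp_pos (b m)) ⟨j, mem_erase.mpr ⟨hji, mem_univ j⟩⟩
  exact sub_pos.mp (by rw [one_sub_softmax]; exact div_pos hpos (sum_exp_pos b))

lemma softmax_div_one_sub_softmax (b : ι → ℝ) (i j : ι) :
    softmax b j / (1 - softmax b i) = exp (b j) / ∑ m ∈ univ.erase i, exp (b m) := by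
  have : Nonempty ι := ⟨i⟩
  rw [one_sub_softmax, softmax, div_div_div_cancel_right₀ (sum_exp_pos b).ne']

lemma sum_erase_exp_update (b : ι → ℝ) (i : ι) (x : ℝ) :
    ∑ m ∈ univ.erase i, exp (update b i x m) = ∑ m ∈ univ.erase i, exp (b m) :=
  sum_congr rfl fun m hm => by rw [update_of_ne (ne_of_mem_erase hm)]

lemma softmax_update_div_one_sub_softmax_update (b : ι → ℝ) {i j : ι} (hji : j ≠ i) (x : ℝ) :
    softmax (update b i x) j / (1 - softmax (update b i x) i) =
      softmax b j / (1 - softmax b i) := by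
  rw [softmax_div_one_sub_softmax, softmax_div_one_sub_softmax, sum_erase_exp_update,
    update_of_ne hji]

lemma hasDerivAt_softmax_update (b : ι → ℝ) (i : ι) (x : ℝ) :
    HasDerivAt (fun y => softmax (update b i y) i)
      (softmax (update b i x) i * (1 - softmax (update b i x) i)) x := by
  set R := ∑ m ∈ univ.erase i, exp (b m)
  have hR : 0 ≤ R := sum_nonneg fun m _ => (exp_pos (b m)).le
  have hsum (y : ℝ) : ∑ m, exp (update b i y m) = exp y + R := by
    rw [← add_sum_erase univ _ (mem_univ i), sum_erase_exp_update, update_self]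
  have hfun : (fun y => softmax (update b i y) i) = fun y => exp y / (exp y + R) := by
    funext y
    rw [softmax, hsum, update_self]
  have hS : exp x + R ≠ 0 := (add_pos_of_pos_of_nonneg (exp_pos x) hR).ne'
  rw [congrFun hfun x, hfun]
  refine ((hasDerivAt_exp x).div ((hasDerivAt_exp x).add_const R) hS).congr_deriv ?_
  field_simp

theorem hasDerivAt_abstainLoss_softmax_update (α : ℝ) (b : ι → ℝ) {i j : ι} (hji : j ≠ i) :
    HasDerivAt (fun x => abstainLoss α i j (softmax (update b i x)))
      (softmax b i * (α - abstainCrossEntropy i j (softmax b))) (b i) := by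
  have hfun : (fun x => abstainLoss α i j (softmax (update b i x))) = fun x =>
      (1 - softmax (update b i x) i) * -log (softmax b j / (1 - softmax b i)) +
        α * log (1 / (1 - softmax (update b i x) i)) := by
    funext x
    rw [abstainLoss, abstainCrossEntropy, softmax_update_div_one_sub_softmax_update b hji]
  have h := hasDerivAt_abstainLoss_of_logistic (hasDerivAt_softmax_update b i (b i))
    (softmax_lt_one _ hji) (-log (softmax b j / (1 - softmax b i))) α
  rw [update_eq_self] at h
  rw [hfun]
  exact h

end Softmax

theorem abstain_loss_deriv_abstain_logit_neg_iff_general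
    (k : ℕ) (a : Fin (k + 1) → ℝ) (j : Fin (k + 1))
    (hj : (j : ℕ) < k) (α : ℝ) :
    deriv (fun x : ℝ =>
      (fun (b : Fin (k + 1) → ℝ) =>
        (fun (p : Fin (k + 1) → ℝ) =>
          (1 - p (Fin.last k)) * (-(Real.log (p j / (1 - p (Fin.last k)))))
            + α * Real.log (1 / (1 - p (Fin.last k))))
        (fun i => Real.exp (b i) / ∑ m, Real.exp (b m)))
      (Function.update a (Fin.last k) x)) (a (Fin.last k)) < 0
    ↔ α < (fun (p : Fin (k + 1) → ℝ) =>
        (1 - p (Fin.last k)) * (-(Real.log (p j / (1 - p (Fin.last k))))))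
      (fun i => Real.exp (a i) / ∑ m, Real.exp (a m)) := by
  change deriv (fun x => abstainLoss α (Fin.last k) j (softmax (update a (Fin.last k) x)))
      (a (Fin.last k)) < 0 ↔ α < abstainCrossEntropy (Fin.last k) j (softmax a)
  have hji : j ≠ Fin.last k := Fin.lt_last_iff_ne_last.mp hj
  rw [(hasDerivAt_abstainLoss_softmax_update α a hji).deriv]
  exact (smul_neg_iff_of_pos_left (softmax_pos a _)).trans sub_neg

/-- The partial derivative of the abstaining loss with respect to the
abstention logit is strictly negative iff `α < (1 - p_{k+1}) * (-log(p_j/(1-p_{k+1})))`. -/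
theorem abstain_loss_deriv_abstain_logit_neg_iff
    (k : ℕ) (hk : 1 ≤ k) (a : Fin (k + 1) → ℝ) (j : Fin (k + 1))
    (hj : (j : ℕ) < k) (α : ℝ) :
    deriv (fun x : ℝ =>
      (fun (b : Fin (k + 1) → ℝ) =>
        (fun (p : Fin (k + 1) → ℝ) =>
          (1 - p (Fin.last k)) * (-(Real.log (p j / (1 - p (Fin.last k)))))
            + α * Real.log (1 / (1 - p (Fin.last k))))
        (fun i => Real.exp (b i) / ∑ m, Real.exp (b m)))
      (Function.update a (Fin.last k) x)) (a (Fin.last k)) < 0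
    ↔ α < (fun (p : Fin (k + 1) → ℝ) =>
        (1 - p (Fin.last k)) * (-(Real.log (p j / (1 - p (Fin.last k))))))
      (fun i => Real.exp (a i) / ∑ m, Real.exp (a m)) :=
  abstain_loss_deriv_abstain_logit_neg_iff_general k a j hj α
end
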